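/- arXiv:2304.11338 — 4 statements merged into one kernel-verified Lean document; each statement's English description precedes it below -/
import Mathlib

section
/- Let the kinetic energy be T(u) = ½∑_{i=1}^n M_i u_i² with constants M_i > 0, let U : ℝⁿ × ℝ → ℝ be C², and assume ᾱ_ν(q,v,t) = α_ν(q,v,t) for every ν = 1,…,k and all (q,v,t). Let q : ℝ → ℝⁿ be a C² curve satisfying the constraints and solving, for each r, the reduced equations M_r q̈_r + ∑_{ν=1}^k M_{m+ν} (∂α_ν/∂v_r) d/dt[α_ν(q(t),v(t),t)] = (∂U/∂q_r) + ∑_{ν=1}^k (∂α_ν/∂v_r)(∂U/∂q_{m+ν}). Then with T*(q,v,t) = ½∑_{r=1}^m M_r v_r² + ½∑_{ν=1}^k M_{m+ν} α_ν(q,v,t)², one has at every time t: d/dt[T*(q(t),v(t),t) − U(q(t),t)] = −(∂U/∂t)(q(t),t). -/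
open scoped BigOperators
noncomputable section
namespace NH

/-- The phase point `(q, v, t)` with `q : ℝⁿ` (n = m+k) and independent velocities `v : ℝᵐ`. -/
abbrev Pt (m k : ℕ) : Type := (Fin (m+k) → ℝ) × (Fin m → ℝ) × ℝ

/-- The full phase point `(q, u, t)` with all velocities `u : ℝⁿ`. -/
abbrev PtL (m k : ℕ) : Type := (Fin (m+k) → ℝ) × (Fin (m+k) → ℝ) × ℝ

/-- Partial derivative of `f (q, w, t)` with respect to `q_i`. -/
def pq {n m' : ℕ} (f : (Fin n → ℝ) × (Fin m' → ℝ) × ℝ → ℝ) (i : Fin n)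
    (x : (Fin n → ℝ) × (Fin m' → ℝ) × ℝ) : ℝ :=
  fderiv ℝ f x (Pi.single i 1, 0, 0)

/-- Partial derivative of `f (q, w, t)` with respect to the velocity variable `w_j`. -/
def pv {n m' : ℕ} (f : (Fin n → ℝ) × (Fin m' → ℝ) × ℝ → ℝ) (j : Fin m')
    (x : (Fin n → ℝ) × (Fin m' → ℝ) × ℝ) : ℝ :=
  fderiv ℝ f x (0, Pi.single j 1, 0)

/-- Partial derivative of `f (q, w, t)` with respect to time `t`. -/
def pt {n m' : ℕ} (f : (Fin n → ℝ) × (Fin m' → ℝ) × ℝ → ℝ)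
    (x : (Fin n → ℝ) × (Fin m' → ℝ) × ℝ) : ℝ :=
  fderiv ℝ f x (0, 0, 1)

/-- Partial derivative of `U (q, t)` with respect to `q_i`. -/
def pUq {n : ℕ} (U : (Fin n → ℝ) × ℝ → ℝ) (i : Fin n) (x : (Fin n → ℝ) × ℝ) : ℝ :=
  fderiv ℝ U x (Pi.single i 1, 0)

/-- Partial derivative of `U (q, t)` with respect to `t`. -/
def pUt {n : ℕ} (U : (Fin n → ℝ) × ℝ → ℝ) (x : (Fin n → ℝ) × ℝ) : ℝ :=
  fderiv ℝ U x (0, 1)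

variable {m k : ℕ}

/-- `û(q,v,t) = (v₁,…,vₘ, α₁(q,v,t),…,α_k(q,v,t))`. -/
def uhat (α : Fin k → Pt m k → ℝ) (x : Pt m k) : Fin (m+k) → ℝ :=
  Fin.append x.2.1 (fun ν => α ν x)

/-- The full phase point `(q, û(q,v,t), t)` associated to `(q,v,t)`. -/
def Lpt (α : Fin k → Pt m k → ℝ) (x : Pt m k) : PtL m k :=
  (x.1, uhat α x, x.2.2)

/-- The restricted Lagrangian `L*(q,v,t) = L(q, û(q,v,t), t)`. -/
def Lstar (L : PtL m k → ℝ) (α : Fin k → Pt m k → ℝ) (x : Pt m k) : ℝ :=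
  L (Lpt α x)

/-- `ᾱ_ν(q,v,t) = ∑_r v_r ∂α_ν/∂v_r`. -/
def abar (α : Fin k → Pt m k → ℝ) (ν : Fin k) (x : Pt m k) : ℝ :=
  ∑ r : Fin m, x.2.1 r * pv (α ν) r x

/-- The restricted energy `E*(q,v,t) = ∑_r v_r ∂L*/∂v_r − L*`. -/
def Estar (L : PtL m k → ℝ) (α : Fin k → Pt m k → ℝ) (x : Pt m k) : ℝ :=
  ∑ r : Fin m, x.2.1 r * pv (Lstar L α) r x - Lstar L α x

/-- The energy `E(q,v,t) = ∑_i û_i (∂L/∂u_i)(q,û,t) − L*(q,v,t)`. -/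
def En (L : PtL m k → ℝ) (α : Fin k → Pt m k → ℝ) (x : Pt m k) : ℝ :=
  ∑ i : Fin (m+k), uhat α x i * pv L i (Lpt α x) - Lstar L α x

/-- `q̇_i(t)`. -/
def qdot {n : ℕ} (q : ℝ → Fin n → ℝ) (t : ℝ) (i : Fin n) : ℝ :=
  deriv (fun s => q s i) t

/-- The independent velocities `v(t) = (q̇₁,…,q̇ₘ)` along a curve. -/
def vel (m k : ℕ) (q : ℝ → Fin (m+k) → ℝ) (t : ℝ) (r : Fin m) : ℝ :=
  qdot q t (Fin.castAdd k r)

/-- The point `(q(t), v(t), t)` along a curve. -/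
def along (m k : ℕ) (q : ℝ → Fin (m+k) → ℝ) (t : ℝ) : Pt m k :=
  (q t, vel m k q t, t)

/-- The curve satisfies the nonholonomic constraints: `q̇_{m+ν} = α_ν(q, v, t)`. -/
def Constrained (α : Fin k → Pt m k → ℝ) (q : ℝ → Fin (m+k) → ℝ) : Prop :=
  ∀ (t : ℝ) (ν : Fin k), qdot q t (Fin.natAdd m ν) = α ν (along m k q t)

/-- The Voronec coefficients `B_rν(t)` along a constrained curve. -/
def Bco (α : Fin k → Pt m k → ℝ) (q : ℝ → Fin (m+k) → ℝ) (r : Fin m) (ν : Fin k) (t : ℝ) : ℝ :=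
  deriv (fun s => pv (α ν) r (along m k q s)) t
    - pq (α ν) (Fin.castAdd k r) (along m k q t)
    - ∑ μ : Fin k, pv (α μ) r (along m k q t) * pq (α ν) (Fin.natAdd m μ) (along m k q t)

/-- The Voronec equations of motion along a constrained curve. -/
def Voronec (L : PtL m k → ℝ) (α : Fin k → Pt m k → ℝ) (q : ℝ → Fin (m+k) → ℝ) : Prop :=
  ∀ (r : Fin m) (t : ℝ),
    deriv (fun s => pv (Lstar L α) r (along m k q s)) t
      - pq (Lstar L α) (Fin.castAdd k r) (along m k q t)
      - ∑ ν : Fin k, pq (Lstar L α) (Fin.natAdd m ν) (along m k q t) * pv (α ν) r (along m k q t)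
      - ∑ ν : Fin k, Bco α q r ν t * pv L (Fin.natAdd m ν) (Lpt α (along m k q t)) = 0

/-!
Multiply the `r`-th reduced equation by `v_r` and sum over `r`. The hypothesis `ᾱ_ν = α_ν`
(Euler's relation: `α_ν` is homogeneous of degree one in `v`) says `v ᵥ* (∂α/∂v) = α`, so the
`ν`-sums become `∑_ν M_{m+ν} α_ν α̇_ν` on the left and `∑_ν α_ν ∂U/∂q_{m+ν}` on the right. The
left side is then `d/dt T*`, and by the constraints the right side is
`∑_i q̇_i ∂U/∂q_i = d/dt U(q,t) - ∂U/∂t`.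
-/

open Matrix

theorem dotProduct_add_vecMul_dotProduct_eq {ι κ R : Type*} [Fintype ι] [Fintype κ]
    [NonUnitalCommSemiring R] {A : Matrix ι κ R} {v x z : ι → R} {y w : κ → R}
    (h : x + A *ᵥ y = z + A *ᵥ w) :
    v ⬝ᵥ x + (v ᵥ* A) ⬝ᵥ y = v ⬝ᵥ z + (v ᵥ* A) ⬝ᵥ w := by
  simpa only [dotProduct_add, dotProduct_mulVec] using congrArg (v ⬝ᵥ ·) h

theorem hasDerivAt_half_sum_mul_sq {ι : Type*} [Fintype ι] (c : ι → ℝ) {f : ι → ℝ → ℝ} {t : ℝ}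
    (hf : ∀ i, DifferentiableAt ℝ (f i) t) :
    HasDerivAt (fun s => (1/2) * ∑ i, c i * f i s ^ 2) (∑ i, f i t * (c i * deriv (f i) t)) t := by
  have h := (HasDerivAt.fun_sum (u := Finset.univ) fun i _ =>
    ((hf i).hasDerivAt.fun_pow 2).const_mul (c i)).const_mul (1/2 : ℝ)
  refine h.congr_deriv ?_
  rw [Finset.mul_sum]
  refine Finset.sum_congr rfl fun i _ => ?_
  push_cast
  ring

theorem fderiv_apply_eq_sum_pUq_add_pUt {n : ℕ} (U : (Fin n → ℝ) × ℝ → ℝ)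
    (x : (Fin n → ℝ) × ℝ) (v : Fin n → ℝ) (c : ℝ) :
    fderiv ℝ U x (v, c) = ∑ i, v i * pUq U i x + c * pUt U x := by
  have hv : ((v, c) : (Fin n → ℝ) × ℝ)
      = ∑ i, v i • ((Pi.single i 1 : Fin n → ℝ), (0 : ℝ)) + c • ((0 : Fin n → ℝ), (1 : ℝ)) := by
    ext j
    · simp [Finset.sum_apply, Pi.single_apply, Prod.fst_sum]
    · simp [Prod.snd_sum]
  simp only [hv, map_add, map_sum, map_smul, pUq, pUt, smul_eq_mul]

theorem hasDerivAt_comp_prod_id {n : ℕ} {U : (Fin n → ℝ) × ℝ → ℝ} {q : ℝ → Fin n → ℝ} {t : ℝ}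
    (hU : DifferentiableAt ℝ U (q t, t)) (hq : DifferentiableAt ℝ q t) :
    HasDerivAt (fun s => U (q s, s)) (∑ i, qdot q t i * pUq U i (q t, t) + pUt U (q t, t)) t := by
  have hq' : HasDerivAt q (qdot q t) t :=
    hasDerivAt_pi.mpr fun i => (differentiableAt_pi.mp hq i).hasDerivAt
  have h := hU.hasFDerivAt.comp_hasDerivAt (f := fun s => (q s, s)) t
    (hq'.prodMk (hasDerivAt_id t))
  rwa [fderiv_apply_eq_sum_pUq_add_pUt, one_mul] at h

theorem differentiable_qdot {n : ℕ} {q : ℝ → Fin n → ℝ} (hq : ContDiff ℝ 2 q) (i : Fin n) :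
    Differentiable ℝ (fun s => qdot q s i) :=
  ((contDiff_succ_iff_deriv (n := 1)).mp (contDiff_pi.mp hq i)).2.2.differentiable one_ne_zero

theorem differentiable_along {q : ℝ → Fin (m+k) → ℝ} (hq : ContDiff ℝ 2 q) :
    Differentiable ℝ (along m k q) :=
  (hq.differentiable two_ne_zero).prodMk
    ((differentiable_pi.mpr fun r => differentiable_qdot hq (Fin.castAdd k r)).prodMk
      differentiable_id)

theorem pointmass_homogeneous_energy_balance_general (m k : ℕ)
    (M : Fin (m+k) → ℝ)
    (U : (Fin (m+k) → ℝ) × ℝ → ℝ) (hU : ContDiff ℝ 2 U)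
    (α : Fin k → Pt m k → ℝ) (hα : ∀ ν, ContDiff ℝ 2 (α ν))
    (habar : ∀ (ν : Fin k) (x : Pt m k), abar α ν x = α ν x)
    (q : ℝ → Fin (m+k) → ℝ) (hq : ContDiff ℝ 2 q)
    (hcon : Constrained α q)
    (hred : ∀ (r : Fin m) (t : ℝ),
      M (Fin.castAdd k r) * deriv (fun s => qdot q s (Fin.castAdd k r)) t
        + ∑ ν : Fin k, M (Fin.natAdd m ν) * pv (α ν) r (along m k q t)
            * deriv (fun s => α ν (along m k q s)) t
      = pUq U (Fin.castAdd k r) (q t, t)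
        + ∑ ν : Fin k, pv (α ν) r (along m k q t) * pUq U (Fin.natAdd m ν) (q t, t))
    (Tst : Pt m k → ℝ)
    (hTst : ∀ x : Pt m k,
      Tst x = (1/2) * ∑ r : Fin m, M (Fin.castAdd k r) * (x.2.1 r) ^ 2
        + (1/2) * ∑ ν : Fin k, M (Fin.natAdd m ν) * (α ν x) ^ 2) :
    ∀ t : ℝ,
      deriv (fun s => Tst (along m k q s) - U (q s, s)) t = - pUt U (q t, t) := by
  intro t
  let A : Matrix (Fin m) (Fin k) ℝ := fun r ν => pv (α ν) r (along m k q t)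
  have hT : HasDerivAt (fun s => Tst (along m k q s))
      (vel m k q t ⬝ᵥ (fun r => M (Fin.castAdd k r) * deriv (fun s => qdot q s (Fin.castAdd k r)) t)
        + (fun ν => α ν (along m k q t))
          ⬝ᵥ (fun ν => M (Fin.natAdd m ν) * deriv (fun s => α ν (along m k q s)) t)) t := by
    simp only [hTst]
    exact (hasDerivAt_half_sum_mul_sq _ fun r => differentiable_qdot hq _ t).add
      (hasDerivAt_half_sum_mul_sq _ fun ν =>
        ((hα ν).differentiable two_ne_zero _).comp t (differentiable_along hq t))
  have hEuler : vel m k q t ᵥ* A = fun ν => α ν (along m k q t) :=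
    funext fun ν => habar ν (along m k q t)
  have hred' : (fun r => M (Fin.castAdd k r) * deriv (fun s => qdot q s (Fin.castAdd k r)) t)
        + A *ᵥ (fun ν => M (Fin.natAdd m ν) * deriv (fun s => α ν (along m k q s)) t)
      = (fun r => pUq U (Fin.castAdd k r) (q t, t))
        + A *ᵥ (fun ν => pUq U (Fin.natAdd m ν) (q t, t)) := funext fun r => by
    simp only [Pi.add_apply, mulVec, dotProduct, A]
    convert hred r t using 3 with ν
    ring
  have hpower := dotProduct_add_vecMul_dotProduct_eq (v := vel m k q t) hred'
  rw [hEuler] at hpower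
  have hsplit : ∑ i, qdot q t i * pUq U i (q t, t)
      = vel m k q t ⬝ᵥ (fun r => pUq U (Fin.castAdd k r) (q t, t))
        + (fun ν => α ν (along m k q t)) ⬝ᵥ (fun ν => pUq U (Fin.natAdd m ν) (q t, t)) := by
    simp only [Fin.sum_univ_add, hcon t, dotProduct, vel]
  rw [(hT.fun_sub (hasDerivAt_comp_prod_id (hU.differentiable two_ne_zero _)
    (hq.differentiable two_ne_zero t))).deriv, hpower, hsplit]
  ring

theorem pointmass_homogeneous_energy_balance (m k : ℕ) (hm : 0 < m) (hk : 0 < k)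
    (M : Fin (m+k) → ℝ) (hM : ∀ i, 0 < M i)
    (U : (Fin (m+k) → ℝ) × ℝ → ℝ) (hU : ContDiff ℝ 2 U)
    (α : Fin k → Pt m k → ℝ) (hα : ∀ ν, ContDiff ℝ 2 (α ν))
    (habar : ∀ (ν : Fin k) (x : Pt m k), abar α ν x = α ν x)
    (q : ℝ → Fin (m+k) → ℝ) (hq : ContDiff ℝ 2 q)
    (hcon : Constrained α q)
    (hred : ∀ (r : Fin m) (t : ℝ),
      M (Fin.castAdd k r) * deriv (fun s => qdot q s (Fin.castAdd k r)) t
        + ∑ ν : Fin k, M (Fin.natAdd m ν) * pv (α ν) r (along m k q t)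
            * deriv (fun s => α ν (along m k q s)) t
      = pUq U (Fin.castAdd k r) (q t, t)
        + ∑ ν : Fin k, pv (α ν) r (along m k q t) * pUq U (Fin.natAdd m ν) (q t, t))
    (Tst : Pt m k → ℝ)
    (hTst : ∀ x : Pt m k,
      Tst x = (1/2) * ∑ r : Fin m, M (Fin.castAdd k r) * (x.2.1 r) ^ 2
        + (1/2) * ∑ ν : Fin k, M (Fin.natAdd m ν) * (α ν x) ^ 2) :
    ∀ t : ℝ,
      deriv (fun s => Tst (along m k q s) - U (q s, s)) t = - pUt U (q t, t) :=
  pointmass_homogeneous_energy_balance_general m k M U hU α hα habar q hq hcon hred Tst hTst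

end NH
end
end

section
/- (Čaplygin-type reduction.) Assume the Lagrangian L and the constraint functions α_ν do not depend on t nor on the coordinates q_{m+1},…,q_n: L = L(q₁,…,qₘ, u) and α_ν = α_ν(q₁,…,qₘ, v). Then a C² curve q : ℝ → ℝⁿ satisfying the constraints solves the Voronec equations if and only if for every r = 1,…,m, along the curve: d/dt[∂L*/∂v_r] − ∂L*/∂q_r − ∑_{ν=1}^k (d/dt[∂α_ν/∂v_r] − ∂α_ν/∂q_r)·(∂L/∂u_{m+ν})(q, û) = 0, where L*(q,v) = L(q, û(q,v)). -/
open scoped BigOperators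
noncomputable section
namespace NH

variable {m k : ℕ}

/-! If `L` and the `α_ν` are invariant under translations of `q_{m+1}, …, q_n`, so is `L*`,
hence all partials `∂α_ν/∂q_{m+μ}` and `∂L*/∂q_{m+ν}` vanish. This kills the sum in `B_rν`
and the third term of the Voronec equations, which then become the stated ones term by term. -/

lemma fderiv_apply_eq_zero_of_forall_add_smul_eq {𝕜 E F : Type*} [NontriviallyNormedField 𝕜]
    [NormedAddCommGroup E] [NormedSpace 𝕜 E] [NormedAddCommGroup F] [NormedSpace 𝕜 F]
    {f : E → F} {x w : E} (h : ∀ s : 𝕜, f (x + s • w) = f x) : fderiv 𝕜 f x w = 0 := by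
  by_cases hf : DifferentiableAt 𝕜 f x
  · rw [← hf.lineDeriv_eq_fderiv]
    simp [lineDeriv, h]
  · -- junk value: `fderiv` is `0` off the differentiability locus
    simp [fderiv_zero_of_not_differentiableAt hf]

def IgnoresDependentCoords {E : Type*} (f : (Fin (m+k) → ℝ) × E × ℝ → ℝ) : Prop :=
  ∀ (x x' : Fin (m+k) → ℝ) (w : E) (t : ℝ),
    (∀ r : Fin m, x (Fin.castAdd k r) = x' (Fin.castAdd k r)) → f (x, w, t) = f (x', w, t)

namespace IgnoresDependentCoords

lemma pq_natAdd_eq_zero {m' : ℕ} {f : (Fin (m+k) → ℝ) × (Fin m' → ℝ) × ℝ → ℝ}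
    (hf : IgnoresDependentCoords f) (i : Fin k)
    (y : (Fin (m+k) → ℝ) × (Fin m' → ℝ) × ℝ) : pq f (Fin.natAdd m i) y = 0 := by
  obtain ⟨x, w, t⟩ := y
  refine fderiv_apply_eq_zero_of_forall_add_smul_eq fun s => ?_
  simp only [Prod.smul_mk, smul_zero, Prod.mk_add_mk, add_zero]
  exact hf _ _ _ _ fun r => by simp [Pi.single_apply, Fin.ext_iff]; omega

lemma Lstar {L : PtL m k → ℝ} {α : Fin k → Pt m k → ℝ} (hL : IgnoresDependentCoords L)
    (hα : ∀ ν, IgnoresDependentCoords (α ν)) : IgnoresDependentCoords (Lstar L α) := by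
  intro x x' v t hx
  have hû : uhat α (x, v, t) = uhat α (x', v, t) := by
    simp only [uhat, fun ν => hα ν x x' v t hx]
  change L (x, uhat α (x, v, t), t) = L (x', uhat α (x', v, t), t)
  rw [hû]
  exact hL x x' _ t hx

end IgnoresDependentCoords

theorem chaplygin_reduction_general (m k : ℕ)
    (L : PtL m k → ℝ)
    (α : Fin k → Pt m k → ℝ)
    (hLind : ∀ (x x' : Fin (m+k) → ℝ) (u : Fin (m+k) → ℝ) (t t' : ℝ),
      (∀ r : Fin m, x (Fin.castAdd k r) = x' (Fin.castAdd k r)) → L (x, u, t) = L (x', u, t'))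
    (hαind : ∀ (ν : Fin k) (x x' : Fin (m+k) → ℝ) (v : Fin m → ℝ) (t t' : ℝ),
      (∀ r : Fin m, x (Fin.castAdd k r) = x' (Fin.castAdd k r)) → α ν (x, v, t) = α ν (x', v, t'))
    (q : ℝ → Fin (m+k) → ℝ)
 :
    Voronec L α q
    ↔ (∀ (r : Fin m) (t : ℝ),
        deriv (fun s => pv (Lstar L α) r (along m k q s)) t
          - pq (Lstar L α) (Fin.castAdd k r) (along m k q t)
          - ∑ ν : Fin k,
              (deriv (fun s => pv (α ν) r (along m k q s)) t
                 - pq (α ν) (Fin.castAdd k r) (along m k q t))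
                * pv L (Fin.natAdd m ν) (Lpt α (along m k q t)) = 0) := by
  have hα : ∀ ν, IgnoresDependentCoords (α ν) := fun ν x x' v t => hαind ν x x' v t t
  have hL : IgnoresDependentCoords L := fun x x' u t => hLind x x' u t t
  simp only [Voronec, Bco, fun ν => (hα ν).pq_natAdd_eq_zero, (hL.Lstar hα).pq_natAdd_eq_zero,
    zero_mul, mul_zero, Finset.sum_const_zero, sub_zero]

theorem chaplygin_reduction (m k : ℕ) (hm : 0 < m) (hk : 0 < k)
    (L : PtL m k → ℝ) (hL : ContDiff ℝ 2 L)
    (α : Fin k → Pt m k → ℝ) (hα : ∀ ν, ContDiff ℝ 2 (α ν))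
    (hLind : ∀ (x x' : Fin (m+k) → ℝ) (u : Fin (m+k) → ℝ) (t t' : ℝ),
      (∀ r : Fin m, x (Fin.castAdd k r) = x' (Fin.castAdd k r)) → L (x, u, t) = L (x', u, t'))
    (hαind : ∀ (ν : Fin k) (x x' : Fin (m+k) → ℝ) (v : Fin m → ℝ) (t t' : ℝ),
      (∀ r : Fin m, x (Fin.castAdd k r) = x' (Fin.castAdd k r)) → α ν (x, v, t) = α ν (x', v, t'))
    (q : ℝ → Fin (m+k) → ℝ) (hq : ContDiff ℝ 2 q)
    (hcon : Constrained α q)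
 :
    Voronec L α q
    ↔ (∀ (r : Fin m) (t : ℝ),
        deriv (fun s => pv (Lstar L α) r (along m k q s)) t
          - pq (Lstar L α) (Fin.castAdd k r) (along m k q t)
          - ∑ ν : Fin k,
              (deriv (fun s => pv (α ν) r (along m k q s)) t
                 - pq (α ν) (Fin.castAdd k r) (along m k q t))
                * pv L (Fin.natAdd m ν) (Lpt α (along m k q t)) = 0) :=
  chaplygin_reduction_general m k L α hLind hαind q

end NH
end
end

section
/- Assume the Lagrangian L and the constraint functions α_ν do not depend on t nor on the coordinates q_{m+1},…,q_n: L = L(q₁,…,qₘ, u) and α_ν = α_ν(q₁,…,qₘ, v). Then along every C² curve satisfying the constraints and solving the Voronec equations, the energy E* satisfies d/dt[E*(q(t),v(t))] = ∑_{ν=1}^k d/dt[(ᾱ_ν − α_ν)(q(t),v(t))]·(∂L/∂u_{m+ν})(q(t), û(q(t),v(t))). -/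
open scoped BigOperators
noncomputable section
namespace NH

variable {m k : ℕ}

/-! For a function `f` ignoring the cyclic coordinates and time, the quantity
`∑ᵣ vᵣ ∂f/∂vᵣ − f` changes along any curve at the rate `∑ᵣ vᵣ (d/dt ∂f/∂vᵣ − ∂f/∂qᵣ)`, the
`v̇`-terms cancelling as in the classical energy computation. Applied to `f = L*` this gives `Ė*`,
and the Voronec equations turn each bracket into `∑_ν B_rν ∂L/∂u_{m+ν}`; applied to `f = α_ν`
it gives `d/dt (ᾱ_ν − α_ν)`, whose brackets are exactly the `B_rν` once `∂α_ν/∂q_{m+μ} = 0`. -/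

lemma fderiv_apply_eq_zero_of_forall_add_smul {E : Type*} [NormedAddCommGroup E]
    [NormedSpace ℝ E] {f : E → ℝ} {x : E} (hf : DifferentiableAt ℝ f x) (w : E)
    (h : ∀ s : ℝ, f (x + s • w) = f x) : fderiv ℝ f x w = 0 := by
  rw [← hf.lineDeriv_eq_fderiv, lineDeriv]
  simp [h]

lemma ContinuousLinearMap.apply_prod_eq_sum {n m' : ℕ}
    (φ : ((Fin n → ℝ) × (Fin m' → ℝ) × ℝ) →L[ℝ] ℝ) (a : Fin n → ℝ) (b : Fin m' → ℝ) (c : ℝ) :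
    φ (a, b, c) = ∑ i, a i * φ (Pi.single i 1, 0, 0)
      + ∑ r, b r * φ (0, Pi.single r 1, 0) + c * φ (0, 0, 1) := by
  have hdecomp : (a, b, c) = (∑ i, a i • ((Pi.single i 1 : Fin n → ℝ), (0 : Fin m' → ℝ), (0 : ℝ)))
      + (∑ r, b r • ((0 : Fin n → ℝ), (Pi.single r 1 : Fin m' → ℝ), (0 : ℝ)))
      + c • ((0 : Fin n → ℝ), (0 : Fin m' → ℝ), (1 : ℝ)) := by
    refine Prod.ext ?_ (Prod.ext ?_ ?_)
    · simp [Prod.fst_sum, ← Pi.single_smul, Finset.univ_sum_single]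
    · simp [Prod.snd_sum, Prod.fst_sum, ← Pi.single_smul, Finset.univ_sum_single]
    · simp [Prod.snd_sum]
  rw [hdecomp, map_add, map_add, map_sum, map_sum, map_smul]
  simp only [map_smul, smul_eq_mul]

/-- `q_{m+1},…,q_n` are the cyclic coordinates of a Chaplygin system. -/
def IgnoresCyclicAndTime {W : Type*} (f : (Fin (m+k) → ℝ) × W × ℝ → ℝ) : Prop :=
  ∀ (x x' : Fin (m+k) → ℝ) (w : W) (t t' : ℝ),
    (∀ r : Fin m, x (Fin.castAdd k r) = x' (Fin.castAdd k r)) → f (x, w, t) = f (x', w, t')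

namespace IgnoresCyclicAndTime

lemma Lstar {L : PtL m k → ℝ} {α : Fin k → Pt m k → ℝ} (hL : IgnoresCyclicAndTime L)
    (hα : ∀ ν, IgnoresCyclicAndTime (α ν)) : IgnoresCyclicAndTime (Lstar L α) := by
  intro x x' v t t' hx
  have huhat : uhat α (x, v, t) = uhat α (x', v, t') := by
    simp only [uhat, fun ν => hα ν x x' v t t' hx]
  simp only [NH.Lstar, Lpt, huhat]
  exact hL x x' _ t t' hx

variable {m' : ℕ} {f : (Fin (m+k) → ℝ) × (Fin m' → ℝ) × ℝ → ℝ}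

lemma fderiv_apply_eq_zero (hf : IgnoresCyclicAndTime f) {x} (hfx : DifferentiableAt ℝ f x)
    {y : Fin (m+k) → ℝ} (hy : ∀ r : Fin m, y (Fin.castAdd k r) = 0) (c : ℝ) :
    fderiv ℝ f x (y, 0, c) = 0 := by
  refine fderiv_apply_eq_zero_of_forall_add_smul hfx _ fun s => ?_
  have hshift : x + s • (y, 0, c) = (x.1 + s • y, x.2.1, x.2.2 + s * c) := by
    ext <;> simp
  rw [hshift]
  exact hf _ _ _ _ _ fun r => by simp [hy]

lemma pq_natAdd (hf : IgnoresCyclicAndTime f) {x} (hfx : DifferentiableAt ℝ f x) (μ : Fin k) :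
    pq f (Fin.natAdd m μ) x = 0 :=
  hf.fderiv_apply_eq_zero hfx (fun r => Pi.single_eq_of_ne (by simp [Fin.ext_iff]; omega) _) 0

lemma pt_eq_zero (hf : IgnoresCyclicAndTime f) {x} (hfx : DifferentiableAt ℝ f x) : pt f x = 0 :=
  hf.fderiv_apply_eq_zero hfx (fun _ => rfl) 1

end IgnoresCyclicAndTime

lemma contDiff_Lstar {L : PtL m k → ℝ} {α : Fin k → Pt m k → ℝ} {n : WithTop ℕ∞}
    (hL : ContDiff ℝ n L) (hα : ∀ ν, ContDiff ℝ n (α ν)) : ContDiff ℝ n (Lstar L α) := by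
  have huhat : ContDiff ℝ n (uhat α) := by
    refine contDiff_pi.mpr fun i => ?_
    induction i using Fin.addCases with
    | left r => simpa [uhat] using contDiff_pi.mp (contDiff_fst.comp contDiff_snd) r
    | right ν => simpa [uhat] using hα ν
  exact hL.comp (contDiff_fst.prodMk (huhat.prodMk (contDiff_snd.comp contDiff_snd)))

section AlongCurve

variable {q : ℝ → Fin (m+k) → ℝ}

lemma contDiff_vel (hq : ContDiff ℝ 2 q) (r : Fin m) : ContDiff ℝ 1 (fun s => vel m k q s r) :=
  (contDiff_succ_iff_deriv.mp (contDiff_pi.mp hq (Fin.castAdd k r))).2.2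

lemma hasDerivAt_along (hq : ContDiff ℝ 2 q) (t : ℝ) :
    HasDerivAt (along m k q) (qdot q t, fun r => deriv (fun s => vel m k q s r) t, 1) t := by
  have hpos : HasDerivAt q (qdot q t) t :=
    hasDerivAt_pi.mpr fun i => ((contDiff_pi.mp hq i).differentiable (by norm_num) t).hasDerivAt
  have hvel : HasDerivAt (vel m k q) (fun r => deriv (fun s => vel m k q s r) t) t :=
    hasDerivAt_pi.mpr fun r => ((contDiff_vel hq r).differentiable one_ne_zero t).hasDerivAt
  exact hpos.prodMk (hvel.prodMk (hasDerivAt_id t))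

lemma hasDerivAt_comp_along (hq : ContDiff ℝ 2 q) {f : Pt m k → ℝ} {t : ℝ}
    (hf : DifferentiableAt ℝ f (along m k q t)) :
    HasDerivAt (fun s => f (along m k q s))
      (∑ i, qdot q t i * pq f i (along m k q t)
        + ∑ r, deriv (fun s => vel m k q s r) t * pv f r (along m k q t)
        + pt f (along m k q t)) t := by
  have hchain := hf.hasFDerivAt.comp_hasDerivAt t (hasDerivAt_along hq t)
  rwa [ContinuousLinearMap.apply_prod_eq_sum, one_mul] at hchain

lemma IgnoresCyclicAndTime.hasDerivAt_comp_along (hq : ContDiff ℝ 2 q) {f : Pt m k → ℝ}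
    (hf : IgnoresCyclicAndTime f) {t : ℝ} (hfd : DifferentiableAt ℝ f (along m k q t)) :
    HasDerivAt (fun s => f (along m k q s))
      (∑ r, vel m k q t r * pq f (Fin.castAdd k r) (along m k q t)
        + ∑ r, deriv (fun s => vel m k q s r) t * pv f r (along m k q t)) t := by
  have hchain := NH.hasDerivAt_comp_along hq hfd
  simp only [Fin.sum_univ_add, hf.pq_natAdd hfd, hf.pt_eq_zero hfd, mul_zero,
    Finset.sum_const_zero, add_zero] at hchain
  exact hchain

lemma IgnoresCyclicAndTime.hasDerivAt_sum_vel_mul_pv_sub (hq : ContDiff ℝ 2 q)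
    {f : Pt m k → ℝ} (hf : IgnoresCyclicAndTime f) (hf2 : ContDiff ℝ 2 f) (t : ℝ) :
    HasDerivAt (fun s => ∑ r, vel m k q s r * pv f r (along m k q s) - f (along m k q s))
      (∑ r, vel m k q t r * (deriv (fun s => pv f r (along m k q s)) t
        - pq f (Fin.castAdd k r) (along m k q t))) t := by
  have hvel r : HasDerivAt (fun s => vel m k q s r) (deriv (fun s => vel m k q s r) t) t :=
    ((contDiff_vel hq r).differentiable one_ne_zero t).hasDerivAt
  have hpv r : HasDerivAt (fun s => pv f r (along m k q s))
      (deriv (fun s => pv f r (along m k q s)) t) t :=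
    ((((hf2.fderiv_right (m := 1) (by norm_num)).clm_apply contDiff_const).differentiable
      one_ne_zero _).comp t (hasDerivAt_along hq t).differentiableAt).hasDerivAt
  have hsum := HasDerivAt.fun_sum (u := Finset.univ) fun r _ => (hvel r).fun_mul (hpv r)
  have hf' := hf.hasDerivAt_comp_along hq (hf2.differentiable (by norm_num) (along m k q t))
  refine (hsum.fun_sub hf').congr_deriv ?_
  simp only [mul_sub, Finset.sum_sub_distrib, Finset.sum_add_distrib]
  ring

lemma Bco_eq_of_ignoresCyclicAndTime {α : Fin k → Pt m k → ℝ} {ν : Fin k}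
    (hα : IgnoresCyclicAndTime (α ν)) (r : Fin m) {t : ℝ}
    (hαd : DifferentiableAt ℝ (α ν) (along m k q t)) :
    Bco α q r ν t = deriv (fun s => pv (α ν) r (along m k q s)) t
      - pq (α ν) (Fin.castAdd k r) (along m k q t) := by
  simp [Bco, hα.pq_natAdd hαd]

lemma Voronec.deriv_pv_Lstar_sub_pq {L : PtL m k → ℝ} {α : Fin k → Pt m k → ℝ}
    (hV : Voronec L α q) (hL : IgnoresCyclicAndTime (Lstar L α))
    (r : Fin m) {t : ℝ} (hLd : DifferentiableAt ℝ (Lstar L α) (along m k q t)) :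
    deriv (fun s => pv (Lstar L α) r (along m k q s)) t
        - pq (Lstar L α) (Fin.castAdd k r) (along m k q t)
      = ∑ ν, Bco α q r ν t * pv L (Fin.natAdd m ν) (Lpt α (along m k q t)) := by
  have h := hV r t
  simp only [hL.pq_natAdd hLd, zero_mul, Finset.sum_const_zero, sub_zero] at h
  linarith

end AlongCurve

theorem chaplygin_energy_balance_general (m k : ℕ)
    (L : PtL m k → ℝ) (hL : ContDiff ℝ 2 L)
    (α : Fin k → Pt m k → ℝ) (hα : ∀ ν, ContDiff ℝ 2 (α ν))
    (hLind : ∀ (x x' : Fin (m+k) → ℝ) (u : Fin (m+k) → ℝ) (t t' : ℝ),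
      (∀ r : Fin m, x (Fin.castAdd k r) = x' (Fin.castAdd k r)) → L (x, u, t) = L (x', u, t'))
    (hαind : ∀ (ν : Fin k) (x x' : Fin (m+k) → ℝ) (v : Fin m → ℝ) (t t' : ℝ),
      (∀ r : Fin m, x (Fin.castAdd k r) = x' (Fin.castAdd k r)) → α ν (x, v, t) = α ν (x', v, t'))
    (q : ℝ → Fin (m+k) → ℝ) (hq : ContDiff ℝ 2 q)
    (hV : Voronec L α q) :
    ∀ t : ℝ,
      deriv (fun s => Estar L α (along m k q s)) t
        = ∑ ν : Fin k,
            deriv (fun s => abar α ν (along m k q s) - α ν (along m k q s)) t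
              * pv L (Fin.natAdd m ν) (Lpt α (along m k q t)) := by
  intro t
  have hLstar : ContDiff ℝ 2 (Lstar L α) := contDiff_Lstar hL hα
  have hLstarInd : IgnoresCyclicAndTime (Lstar L α) := IgnoresCyclicAndTime.Lstar hLind hαind
  have hαd ν : Differentiable ℝ (α ν) := (hα ν).differentiable (by norm_num)
  calc deriv (fun s => Estar L α (along m k q s)) t
      = ∑ r, vel m k q t r * (deriv (fun s => pv (Lstar L α) r (along m k q s)) t
          - pq (Lstar L α) (Fin.castAdd k r) (along m k q t)) :=
        (hLstarInd.hasDerivAt_sum_vel_mul_pv_sub hq hLstar t).deriv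
    _ = ∑ ν, (∑ r, vel m k q t r * Bco α q r ν t)
          * pv L (Fin.natAdd m ν) (Lpt α (along m k q t)) := by
        simp only [hV.deriv_pv_Lstar_sub_pq hLstarInd _ (hLstar.differentiable (by norm_num) _),
          Finset.mul_sum, Finset.sum_mul, mul_assoc]
        exact Finset.sum_comm
    _ = _ := by
        congr! 2 with ν
        refine Eq.trans ?_
          (IgnoresCyclicAndTime.hasDerivAt_sum_vel_mul_pv_sub hq (hαind ν) (hα ν) t).deriv.symm
        simp only [Bco_eq_of_ignoresCyclicAndTime (hαind ν) _ (hαd ν _)]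

theorem chaplygin_energy_balance (m k : ℕ) (hm : 0 < m) (hk : 0 < k)
    (L : PtL m k → ℝ) (hL : ContDiff ℝ 2 L)
    (α : Fin k → Pt m k → ℝ) (hα : ∀ ν, ContDiff ℝ 2 (α ν))
    (hLind : ∀ (x x' : Fin (m+k) → ℝ) (u : Fin (m+k) → ℝ) (t t' : ℝ),
      (∀ r : Fin m, x (Fin.castAdd k r) = x' (Fin.castAdd k r)) → L (x, u, t) = L (x', u, t'))
    (hαind : ∀ (ν : Fin k) (x x' : Fin (m+k) → ℝ) (v : Fin m → ℝ) (t t' : ℝ),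
      (∀ r : Fin m, x (Fin.castAdd k r) = x' (Fin.castAdd k r)) → α ν (x, v, t) = α ν (x', v, t'))
    (q : ℝ → Fin (m+k) → ℝ) (hq : ContDiff ℝ 2 q)
    (hcon : Constrained α q)
    (hV : Voronec L α q) :
    ∀ t : ℝ,
      deriv (fun s => Estar L α (along m k q s)) t
        = ∑ ν : Fin k,
            deriv (fun s => abar α ν (along m k q s) - α ν (along m k q s)) t
              * pv L (Fin.natAdd m ν) (Lpt α (along m k q t)) :=
  chaplygin_energy_balance_general m k L hL α hα hLind hαind q hq hV

end NH
end
end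

section
/- Let q : ℝ → ℝⁿ be a C² curve satisfying the constraints, let φ_ν : ℝⁿ × ℝⁿ × ℝ → ℝ (ν = 1,…,k) be C¹ with the relations (∂φ_ν/∂u_r)(q,û,t) + ∑_{μ=1}^k (∂φ_ν/∂u_{m+μ})(q,û,t)·(∂α_μ/∂v_r)(q,v,t) = 0 holding along the curve for all ν, r, and let λ₁,…,λ_k : ℝ → ℝ be such that the Lagrange equations with multipliers hold along the curve: for each i = 1,…,n, d/dt[(∂L/∂u_i)(q,û,t)] − (∂L/∂q_i)(q,û,t) = ∑_{ν=1}^k λ_ν (∂φ_ν/∂u_i)(q,û,t). Then at every time t: d/dt[∑_{i=1}^n q̇_i (∂L/∂u_i)(q,û,t) − L(q,û,t)] = −(∂L/∂t)(q,û,t) − ∑_{ν=1}^k (ᾱ_ν − α_ν)(q,v,t)·(d/dt[(∂L/∂u_{m+ν})(q,û,t)] − (∂L/∂q_{m+ν})(q,û,t)). -/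
open scoped BigOperators
noncomputable section
namespace NH

variable {m k : ℕ}

/-!
Along the jet `s ↦ (q s, q̇ s, s)` of a C² curve the chain rule gives
`d/dt (∑ q̇ᵢ ∂L/∂uᵢ − L) = ∑ q̇ᵢ (d/dt ∂L/∂uᵢ − ∂L/∂qᵢ) − ∂L/∂t`, the `q̈`-terms cancelling.
By the multiplier equations the residuals are `∑ λ_ν ∂φ_ν/∂uᵢ`, and the relations on `φ` say that
every `∂φ_ν/∂u` kills the vectors `e_r + ∑_μ (∂α_μ/∂v_r) e_{m+μ}`. Along a constrained curve
`q̇ = ∑_r v_r (e_r + ∑_μ (∂α_μ/∂v_r) e_{m+μ}) + ∑_μ (α_μ − ᾱ_μ) e_{m+μ}`, so only the dependent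
components survive, paired with the residuals of the dependent coordinates.
-/

section PartialDerivatives

variable {n m' : ℕ}

theorem fderiv_apply_eq_sum_partials (f : (Fin n → ℝ) × (Fin m' → ℝ) × ℝ → ℝ)
    (x : (Fin n → ℝ) × (Fin m' → ℝ) × ℝ) (w : Fin n → ℝ) (z : Fin m' → ℝ) (τ : ℝ) :
    fderiv ℝ f x (w, z, τ)
      = ∑ i, w i * pq f i x + ∑ j, z j * pv f j x + τ * pt f x := by
  have hdecomp : ((w, z, τ) : (Fin n → ℝ) × (Fin m' → ℝ) × ℝ)
      = ∑ i, w i • ((Pi.single i 1 : Fin n → ℝ), (0 : Fin m' → ℝ), (0 : ℝ))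
        + ∑ j, z j • ((0 : Fin n → ℝ), (Pi.single j 1 : Fin m' → ℝ), (0 : ℝ))
        + τ • ((0 : Fin n → ℝ), (0 : Fin m' → ℝ), (1 : ℝ)) := by
    ext <;> simp [Prod.fst_sum, Prod.snd_sum, Finset.sum_apply, Pi.single_apply]
  rw [hdecomp, map_add, map_add, map_sum, map_sum, map_smul]
  simp only [map_smul, smul_eq_mul, pq, pv, pt]

end PartialDerivatives

section Jet

variable {n : ℕ} {q : ℝ → Fin n → ℝ}

theorem qdot_eq_deriv (hq : Differentiable ℝ q) : qdot q = deriv q := by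
  ext t i
  exact (hasDerivAt_pi.mp (hq t).hasDerivAt i).deriv

theorem hasDerivAt_jet (hq : ContDiff ℝ 2 q) (t : ℝ) :
    HasDerivAt (fun s => (q s, deriv q s, s)) (deriv q t, deriv (deriv q) t, 1) t :=
  ((hq.differentiable (by norm_num)) t).hasDerivAt.prodMk
    ((((ContDiff.deriv' (n := 1) hq).differentiable one_ne_zero) t).hasDerivAt.prodMk
      (hasDerivAt_id t))

theorem contDiff_jet (hq : ContDiff ℝ 2 q) :
    ContDiff ℝ 1 (fun s => (q s, deriv q s, s)) :=
  (hq.of_le (by norm_num)).prodMk ((ContDiff.deriv' (n := 1) hq).prodMk contDiff_id)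

theorem hasDerivAt_comp_jet {f : (Fin n → ℝ) × (Fin n → ℝ) × ℝ → ℝ} (hf : ContDiff ℝ 1 f)
    (hq : ContDiff ℝ 2 q) (t : ℝ) :
    HasDerivAt (fun s => f (q s, deriv q s, s))
      (∑ i, deriv q t i * pq f i (q t, deriv q t, t)
        + ∑ i, deriv (deriv q) t i * pv f i (q t, deriv q t, t)
        + pt f (q t, deriv q t, t)) t := by
  have h := ((hf.differentiable one_ne_zero) _).hasFDerivAt.comp_hasDerivAt t (hasDerivAt_jet hq t)
  rwa [fderiv_apply_eq_sum_partials, one_mul] at h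

theorem differentiable_pv_comp_jet {f : (Fin n → ℝ) × (Fin n → ℝ) × ℝ → ℝ}
    (hf : ContDiff ℝ 2 f) (hq : ContDiff ℝ 2 q) (j : Fin n) :
    Differentiable ℝ (fun s => pv f j (q s, deriv q s, s)) := by
  have hpv : ContDiff ℝ 1 (pv f j) :=
    ((ContinuousLinearMap.apply ℝ ℝ _).contDiff.comp (hf.fderiv_right (by norm_num)))
  exact (hpv.comp (contDiff_jet hq)).differentiable one_ne_zero

theorem hasDerivAt_energy {L : (Fin n → ℝ) × (Fin n → ℝ) × ℝ → ℝ} (hL : ContDiff ℝ 2 L)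
    (hq : ContDiff ℝ 2 q) (t : ℝ) :
    HasDerivAt (fun s => ∑ i, deriv q s i * pv L i (q s, deriv q s, s) - L (q s, deriv q s, s))
      (∑ i, deriv q t i * (deriv (fun s => pv L i (q s, deriv q s, s)) t
          - pq L i (q t, deriv q t, t))
        - pt L (q t, deriv q t, t)) t := by
  have hvel : ∀ i, HasDerivAt (fun s => deriv q s i) (deriv (deriv q) t i) t :=
    hasDerivAt_pi.mp (((ContDiff.deriv' (n := 1) hq).differentiable one_ne_zero) t).hasDerivAt
  have hmom : ∀ i, HasDerivAt (fun s => pv L i (q s, deriv q s, s))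
      (deriv (fun s => pv L i (q s, deriv q s, s)) t) t :=
    fun i => (differentiable_pv_comp_jet hL hq i t).hasDerivAt
  have hsum := HasDerivAt.fun_sum (u := Finset.univ) fun i _ => (hvel i).fun_mul (hmom i)
  refine (hsum.fun_sub (hasDerivAt_comp_jet (hL.of_le (by norm_num)) hq t)).congr_deriv ?_
  simp only [mul_sub, Finset.sum_sub_distrib, Finset.sum_add_distrib]
  ring

end Jet

theorem sum_mul_eq_of_relation (u Φ : Fin (m + k) → ℝ) (a : Fin k → Fin m → ℝ)
    (hrel : ∀ r, Φ (Fin.castAdd k r) + ∑ μ, Φ (Fin.natAdd m μ) * a μ r = 0) :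
    ∑ i, u i * Φ i
      = ∑ μ, (u (Fin.natAdd m μ) - ∑ r, u (Fin.castAdd k r) * a μ r) * Φ (Fin.natAdd m μ) := by
  have hΦ : ∀ r, Φ (Fin.castAdd k r) = -∑ μ, Φ (Fin.natAdd m μ) * a μ r :=
    fun r => eq_neg_of_add_eq_zero_left (hrel r)
  simp only [Fin.sum_univ_add, hΦ, mul_neg, Finset.mul_sum, Finset.sum_neg_distrib, sub_mul,
    Finset.sum_sub_distrib, Finset.sum_mul]
  rw [Finset.sum_comm]
  simp only [mul_comm, mul_left_comm]
  ring

theorem sum_mul_eq_of_multipliers (u E : Fin (m + k) → ℝ) (a : Fin k → Fin m → ℝ)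
    (Φ : Fin k → Fin (m + k) → ℝ) (lam : Fin k → ℝ)
    (hrel : ∀ ν r, Φ ν (Fin.castAdd k r) + ∑ μ, Φ ν (Fin.natAdd m μ) * a μ r = 0)
    (hE : ∀ i, E i = ∑ ν, lam ν * Φ ν i) :
    ∑ i, u i * E i
      = ∑ μ, (u (Fin.natAdd m μ) - ∑ r, u (Fin.castAdd k r) * a μ r) * E (Fin.natAdd m μ) := by
  calc ∑ i, u i * E i = ∑ ν, lam ν * ∑ i, u i * Φ ν i := by
        simp only [hE, Finset.mul_sum]
        rw [Finset.sum_comm]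
        simp only [mul_left_comm]
    _ = _ := by
        simp only [sum_mul_eq_of_relation u _ a (hrel _), hE, Finset.mul_sum]
        rw [Finset.sum_comm]
        simp only [mul_left_comm]

theorem Lpt_along_eq {α : Fin k → Pt m k → ℝ} {q : ℝ → Fin (m + k) → ℝ}
    (hcon : Constrained α q) (s : ℝ) :
    Lpt α (along m k q s) = (q s, qdot q s, s) := by
  refine Prod.ext rfl (Prod.ext (funext fun i => ?_) rfl)
  refine Fin.addCases (fun r => ?_) (fun ν => ?_) i
  · simp only [Lpt, uhat, along, Fin.append_left, vel]
  · simp only [Lpt, uhat, Fin.append_right, hcon s ν]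

theorem multiplier_energy_balance_general (m k : ℕ)
    (L : PtL m k → ℝ) (hL : ContDiff ℝ 2 L)
    (α : Fin k → Pt m k → ℝ)
    (q : ℝ → Fin (m+k) → ℝ) (hq : ContDiff ℝ 2 q)
    (hcon : Constrained α q)
    (φ : Fin k → PtL m k → ℝ)
    (hrel : ∀ (t : ℝ) (ν : Fin k) (r : Fin m),
      pv (φ ν) (Fin.castAdd k r) (Lpt α (along m k q t))
        + ∑ μ : Fin k, pv (φ ν) (Fin.natAdd m μ) (Lpt α (along m k q t))
            * pv (α μ) r (along m k q t) = 0)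
    (lam : Fin k → ℝ → ℝ)
    (hEL : ∀ (i : Fin (m+k)) (t : ℝ),
      deriv (fun s => pv L i (Lpt α (along m k q s))) t
        - pq L i (Lpt α (along m k q t))
        = ∑ ν : Fin k, lam ν t * pv (φ ν) i (Lpt α (along m k q t))) :
    ∀ t : ℝ,
      deriv (fun s =>
          ∑ i : Fin (m+k), qdot q s i * pv L i (Lpt α (along m k q s))
            - L (Lpt α (along m k q s))) t
        = - pt L (Lpt α (along m k q t))
          - ∑ ν : Fin k,
              (abar α ν (along m k q t) - α ν (along m k q t))
                * (deriv (fun s => pv L (Fin.natAdd m ν) (Lpt α (along m k q s))) t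
                   - pq L (Fin.natAdd m ν) (Lpt α (along m k q t))) := by
  intro t
  have hqdot := qdot_eq_deriv (hq.differentiable (by norm_num))
  have hdep : ∀ ν, α ν (along m k q t) = deriv q t (Fin.natAdd m ν) := fun ν => by
    rw [← hcon t ν, hqdot]
  have habar : ∀ ν, abar α ν (along m k q t)
      = ∑ r, deriv q t (Fin.castAdd k r) * pv (α ν) r (along m k q t) := fun ν => by
    simp only [abar, along, vel, hqdot]
  simp only [Lpt_along_eq hcon, hqdot] at hrel hEL ⊢
  rw [(hasDerivAt_energy hL hq t).deriv,
    sum_mul_eq_of_multipliers _ _ _ _ _ (hrel t) (hEL · t)]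
  simp only [hdep, habar]
  rw [sub_eq_neg_add, sub_eq_add_neg, ← Finset.sum_neg_distrib]
  exact congrArg _ (Finset.sum_congr rfl fun μ _ => by ring)

theorem multiplier_energy_balance (m k : ℕ) (hm : 0 < m) (hk : 0 < k)
    (L : PtL m k → ℝ) (hL : ContDiff ℝ 2 L)
    (α : Fin k → Pt m k → ℝ) (hα : ∀ ν, ContDiff ℝ 2 (α ν))
    (q : ℝ → Fin (m+k) → ℝ) (hq : ContDiff ℝ 2 q)
    (hcon : Constrained α q)
    (φ : Fin k → PtL m k → ℝ) (hφ : ∀ ν, ContDiff ℝ 1 (φ ν))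
    (hrel : ∀ (t : ℝ) (ν : Fin k) (r : Fin m),
      pv (φ ν) (Fin.castAdd k r) (Lpt α (along m k q t))
        + ∑ μ : Fin k, pv (φ ν) (Fin.natAdd m μ) (Lpt α (along m k q t))
            * pv (α μ) r (along m k q t) = 0)
    (lam : Fin k → ℝ → ℝ)
    (hEL : ∀ (i : Fin (m+k)) (t : ℝ),
      deriv (fun s => pv L i (Lpt α (along m k q s))) t
        - pq L i (Lpt α (along m k q t))
        = ∑ ν : Fin k, lam ν t * pv (φ ν) i (Lpt α (along m k q t))) :
    ∀ t : ℝ,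
      deriv (fun s =>
          ∑ i : Fin (m+k), qdot q s i * pv L i (Lpt α (along m k q s))
            - L (Lpt α (along m k q s))) t
        = - pt L (Lpt α (along m k q t))
          - ∑ ν : Fin k,
              (abar α ν (along m k q t) - α ν (along m k q t))
                * (deriv (fun s => pv L (Fin.natAdd m ν) (Lpt α (along m k q s))) t
                   - pq L (Fin.natAdd m ν) (Lpt α (along m k q t))) :=
  multiplier_energy_balance_general m k L hL α q hq hcon φ hrel lam hEL

end NH
end
end
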